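/- In a geodesic δ-hyperbolic space, let b and d be points with |b - d| = Δ, let σ be a geodesic, and let a and c be orthogonal projections of b and d on σ respectively. Assume |a - b| > 3Δ + 6δ and d(d, σ) ≥ d(b, σ). Then |a - c| ≤ 8δ. -/

import Mathlib

open Metric Set

/-- `s` is a geodesic segment from `x` to `y`. -/
def IsGeodSeg {X : Type*} [MetricSpace X] (x y : X) (s : Set X) : Prop :=
  ∃ f : ℝ → X, f 0 = x ∧ f (dist x y) = y ∧
    (∀ a ∈ Icc (0:ℝ) (dist x y), ∀ b ∈ Icc (0:ℝ) (dist x y), dist (f a) (f b) = |a - b|) ∧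
    s = f '' Icc (0:ℝ) (dist x y)

/-- A geodesic metric space: any two points are joined by a geodesic segment. -/
def GeodesicSpace (X : Type*) [MetricSpace X] : Prop :=
  ∀ x y : X, ∃ s : Set X, IsGeodSeg x y s

/-- δ-hyperbolicity via δ-thin geodesic triangles. -/
def ThinTriangles (X : Type*) [MetricSpace X] (δ : ℝ) : Prop :=
  ∀ (x y z : X) (sxy syz sxz : Set X),
    IsGeodSeg x y sxy → IsGeodSeg y z syz → IsGeodSeg x z sxz →
    ∀ p ∈ sxy, infDist p (syz ∪ sxz) ≤ δ

/-!
Let `m` be the midpoint of the subsegment `[a, c]` of `σ`. Thinness of the triangle `a c d` puts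
a point `q` of `[c, d] ∪ [a, d]` within `δ` of `m`. A point within `ε` of `m` lying on a
perpendicular is within `ε` of its foot, because the foot is a nearest point of `σ`. If
`q ∈ [c, d]`, this gives `|c - q| ≤ δ`, so `|a - c| = 2|c - m| ≤ 4δ`. If `q ∈ [a, d]`, thinness
of the triangle `a d b` puts a point `r` of `[d, b] ∪ [a, b]` within `δ` of `q`. On `[d, b]` it
would force `|a - b| ≤ Δ + 2δ`, contradicting the hypothesis; on `[a, b]` it gives
`|a - r| ≤ 2δ`, so `|a - c| = 2|a - m| ≤ 8δ`.
-/

section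

variable {X : Type*} [MetricSpace X]

theorem isGeodSeg_image_Icc {g : ℝ → X} {s t : ℝ} (hst : s ≤ t)
    (hg : ∀ u ∈ Icc s t, ∀ v ∈ Icc s t, dist (g u) (g v) = |u - v|) :
    IsGeodSeg (g s) (g t) (g '' Icc s t) := by
  have hd : dist (g s) (g t) = t - s := by
    rw [hg s ⟨le_rfl, hst⟩ t ⟨hst, le_rfl⟩, abs_sub_comm, abs_of_nonneg (sub_nonneg.2 hst)]
  refine ⟨fun u => g (s + u), by simp, by simp [hd], fun u hu v hv => ?_, ?_⟩
  · rw [hd] at hu hv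
    rw [hg (s + u) ⟨by linarith [hu.1], by linarith [hu.2]⟩ (s + v)
      ⟨by linarith [hv.1], by linarith [hv.2]⟩, add_sub_add_left_eq_sub]
  · rw [hd, ← image_image g (s + ·), image_const_add_Icc, add_zero, add_sub_cancel]

namespace IsGeodSeg

variable {x y : X} {s : Set X}

theorem symm (h : IsGeodSeg x y s) : IsGeodSeg y x s := by
  obtain ⟨f, hx, hy, hf, rfl⟩ := h
  set L := dist x y
  have hrev := isGeodSeg_image_Icc (g := fun u => f (L - u)) dist_nonneg fun u hu v hv => by
    rw [hf (L - u) ⟨by linarith [hu.2], by linarith [hu.1]⟩ (L - v)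
      ⟨by linarith [hv.2], by linarith [hv.1]⟩, sub_sub_sub_cancel_left, abs_sub_comm]
  rwa [← image_image f (L - ·), image_const_sub_Icc, sub_self, sub_zero, hy, hx] at hrev

theorem left_mem (h : IsGeodSeg x y s) : x ∈ s := by
  obtain ⟨f, hx, -, -, rfl⟩ := h
  exact ⟨0, ⟨le_rfl, dist_nonneg⟩, hx⟩

theorem dist_add_dist (h : IsGeodSeg x y s) {p : X} (hp : p ∈ s) :
    dist x p + dist p y = dist x y := by
  obtain ⟨f, hx, hy, hf, rfl⟩ := h
  obtain ⟨u, hu, rfl⟩ := hp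
  set L := dist x y
  have hL : 0 ≤ L := dist_nonneg
  rw [← hx, ← hy, hf 0 ⟨le_rfl, hL⟩ u hu, hf u hu L ⟨hL, le_rfl⟩,
    abs_of_nonpos (by linarith [hu.1]), abs_of_nonpos (by linarith [hu.2])]
  ring

theorem isCompact (h : IsGeodSeg x y s) : IsCompact s := by
  obtain ⟨f, -, -, hf, rfl⟩ := h
  refine isCompact_Icc.image_of_continuousOn (LipschitzOnWith.continuousOn (K := 1) ?_)
  refine LipschitzOnWith.of_dist_le_mul fun u hu v hv => ?_
  rw [hf u hu v hv, NNReal.coe_one, one_mul, Real.dist_eq]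

theorem exists_midpoint (h : IsGeodSeg x y s) :
    ∃ m ∈ s, dist x m = dist x y / 2 ∧ dist m y = dist x y / 2 := by
  obtain ⟨f, hx, hy, hf, rfl⟩ := h
  set L := dist x y
  have hL : 0 ≤ L := dist_nonneg
  have hm : L / 2 ∈ Icc 0 L := ⟨by linarith, by linarith⟩
  refine ⟨f (L / 2), ⟨_, hm, rfl⟩, ?_, ?_⟩
  · rw [← hx, hf 0 ⟨le_rfl, hL⟩ _ hm, abs_of_nonpos (by linarith)]
    ring
  · rw [← hy, hf _ hm L ⟨hL, le_rfl⟩, abs_of_nonpos (by linarith)]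
    ring

theorem exists_subset_of_mem (h : IsGeodSeg x y s) {p q : X} (hp : p ∈ s) (hq : q ∈ s) :
    ∃ S ⊆ s, IsGeodSeg p q S := by
  obtain ⟨f, -, -, hf, rfl⟩ := h
  obtain ⟨u, hu, rfl⟩ := hp
  obtain ⟨v, hv, rfl⟩ := hq
  have hsub {u v : ℝ} (hu : u ∈ Icc 0 (dist x y)) (hv : v ∈ Icc 0 (dist x y)) (huv : u ≤ v) :
      f '' Icc u v ⊆ f '' Icc 0 (dist x y) ∧ IsGeodSeg (f u) (f v) (f '' Icc u v) :=
    ⟨image_mono (Icc_subset_Icc hu.1 hv.2), isGeodSeg_image_Icc huv fun w hw z hz =>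
      hf w ⟨hu.1.trans hw.1, hw.2.trans hv.2⟩ z ⟨hu.1.trans hz.1, hz.2.trans hv.2⟩⟩
  rcases le_total u v with huv | hvu
  · exact ⟨_, hsub hu hv huv⟩
  · exact ⟨_, (hsub hv hu hvu).1, (hsub hv hu hvu).2.symm⟩

end IsGeodSeg

theorem ThinTriangles.exists_dist_le {δ : ℝ} (hthin : ThinTriangles X δ) {x y z p : X}
    {sxy syz sxz : Set X} (hxy : IsGeodSeg x y sxy) (hyz : IsGeodSeg y z syz)
    (hxz : IsGeodSeg x z sxz) (hp : p ∈ sxy) : ∃ q ∈ syz ∪ sxz, dist p q ≤ δ := by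
  obtain ⟨q, hq, hpq⟩ :=
    (hyz.isCompact.union hxz.isCompact).exists_infDist_eq_dist ⟨y, .inl hyz.left_mem⟩ p
  exact ⟨q, hq, hpq ▸ hthin x y z sxy syz sxz hxy hyz hxz p hp⟩

theorem dist_le_of_between_of_nearest {a b m r : X} {ε : ℝ}
    (hbtw : dist a r + dist r b = dist a b) (hnearest : dist b a ≤ dist b m)
    (hmr : dist m r ≤ ε) : dist a r ≤ ε := by
  linarith [dist_triangle b r m, dist_comm b a, dist_comm r b, dist_comm r m]

end

theorem lemma2_projections_close_general {X : Type*} [MetricSpace X] (δ : ℝ)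
    (hgeo : GeodesicSpace X) (hthin : ThinTriangles X δ)
    (x y b d a c : X) (σ : Set X) (Δ : ℝ)
    (hσ : IsGeodSeg x y σ) (hΔ : dist b d = Δ)
    (ha : a ∈ σ) (haP : dist b a = infDist b σ)
    (hc : c ∈ σ) (hcP : dist d c = infDist d σ)
    (hfar : dist a b > 3 * Δ + 6 * δ) :
    dist a c ≤ 8 * δ := by
  obtain ⟨S, hSσ, hS⟩ := hσ.exists_subset_of_mem ha hc
  obtain ⟨m, hmS, ham, hmc⟩ := hS.exists_midpoint
  have hbm : dist b a ≤ dist b m := haP ▸ infDist_le_dist_of_mem (hSσ hmS)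
  have hdm : dist d c ≤ dist d m := hcP ▸ infDist_le_dist_of_mem (hSσ hmS)
  obtain ⟨scd, hscd⟩ := hgeo c d
  obtain ⟨sad, hsad⟩ := hgeo a d
  obtain ⟨q, hq | hq, hmq⟩ := hthin.exists_dist_le hS hscd hsad hmS
  · have hcq := dist_le_of_between_of_nearest (hscd.dist_add_dist hq) hdm hmq
    linarith [dist_triangle c q m, dist_comm m q, dist_comm m c, dist_nonneg (x := m) (y := q)]
  obtain ⟨sdb, hsdb⟩ := hgeo d b
  obtain ⟨sab, hsab⟩ := hgeo a b
  obtain ⟨r, hr | hr, hqr⟩ := hthin.exists_dist_le hsad hsdb hsab hq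
  · have hbr : dist b r ≤ Δ := by
      linarith [hsdb.dist_add_dist hr, dist_comm b r, dist_comm d b, dist_nonneg (x := d) (y := r)]
    have hab : dist a b ≤ Δ + 2 * δ := by
      linarith [dist_triangle b r q, dist_triangle b q m, dist_comm r q, dist_comm q m,
        dist_comm a b]
    linarith [dist_nonneg (x := m) (y := q), hΔ ▸ dist_nonneg (x := b) (y := d)]
  · have hmr : dist m r ≤ 2 * δ := by linarith [dist_triangle m q r]
    have har := dist_le_of_between_of_nearest (hsab.dist_add_dist hr) hbm hmr
    linarith [dist_triangle a r m, dist_comm r m]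

theorem lemma2_projections_close {X : Type*} [MetricSpace X] (δ : ℝ) (hδ : 0 ≤ δ)
    (hgeo : GeodesicSpace X) (hthin : ThinTriangles X δ)
    (x y b d a c : X) (σ : Set X) (Δ : ℝ)
    (hσ : IsGeodSeg x y σ) (hΔ : dist b d = Δ)
    (ha : a ∈ σ) (haP : dist b a = infDist b σ)
    (hc : c ∈ σ) (hcP : dist d c = infDist d σ)
    (hfar : dist a b > 3 * Δ + 6 * δ)
    (hord : infDist b σ ≤ infDist d σ) :
    dist a c ≤ 8 * δ :=
  lemma2_projections_close_general δ hgeo hthin x y b d a c σ Δ hσ hΔ ha haP hc hcP hfar
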